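/- arXiv:2510.22520 — 3 statements merged into one kernel-verified Lean document; each statement's English description precedes it below -/
import Mathlib

section
/- Let G be a connected graph with maximum degree d_max, and consider a randomized depth-first search with a uniformly random root and, independently for each vertex, a uniformly random permutation of its neighbors determining exploration order. Then for any edge e = {u,v} of G, the probability that e belongs to the resulting DFS spanning tree is at least 1/max(deg(u), deg(v)), and hence at least 1/d_max. -/
/-!
STATEMENT 0: For a connected graph `G` with a randomized DFS (uniformly random root,
and independently for each vertex a uniformly random permutation of its neighbors
determining exploration order), every edge `{u,v}` belongs to the resulting DFS
spanning tree with probability at least `1 / max (deg u) (deg v)`, hence at least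
`1 / d_max` where `d_max` is the maximum degree.
-/

open scoped Classical

namespace RSNN

/-- Iterative depth-first search with explicit fuel.  Stack entries are pairs
`(vertex, optional parent)`; the output lists, in discovery order, each newly
discovered vertex together with the parent along whose edge it was discovered. -/
def dfsRun {n : ℕ} (adj : Fin n → List (Fin n)) :
    ℕ → List (Fin n × Option (Fin n)) → List (Fin n) → List (Fin n × Option (Fin n))
  | 0, _, _ => []
  | _ + 1, [], _ => []
  | fuel + 1, (v, p) :: stack, visited =>
    if v ∈ visited then dfsRun adj fuel stack visited
    else (v, p) :: dfsRun adj fuel ((adj v).map (fun w => (w, some v)) ++ stack) (v :: visited)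

/-- DFS from root `r`, with enough fuel to finish on any graph on `Fin n`. -/
def dfsFrom {n : ℕ} (adj : Fin n → List (Fin n)) (r : Fin n) :
    List (Fin n × Option (Fin n)) :=
  dfsRun adj (n * n + n + 1) [(r, none)] []

/-- The neighbor list of `v`, explored in the order determined by the permutation `ρ`:
neighbors `w` are visited in increasing order of `ρ w`.  A uniformly random `ρ` induces
a uniformly random ordering of the neighbors of `v`. -/
noncomputable def nbrList {n : ℕ} (G : SimpleGraph (Fin n)) [DecidableRel G.Adj]
    (ρ : Equiv.Perm (Fin n)) (v : Fin n) : List (Fin n) :=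
  (((G.neighborFinset v).image ρ).sort (· ≤ ·)).map ρ.symm

/-- Sample space of the randomized DFS: a uniformly random root together with an
independent uniformly random permutation for each vertex. -/
abbrev Omega (n : ℕ) := Fin n × (Fin n → Equiv.Perm (Fin n))

/-- The list of `(vertex, parent)` discoveries of the randomized DFS at sample `ω`. -/
noncomputable def dfsResult {n : ℕ} (G : SimpleGraph (Fin n)) [DecidableRel G.Adj]
    (ω : Omega n) : List (Fin n × Option (Fin n)) :=
  dfsFrom (fun v => nbrList G (ω.2 v) v) ω.1

/-- The (multi)set of discovery edges of the DFS spanning tree at sample `ω`. -/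
noncomputable def dfsTreeEdges {n : ℕ} (G : SimpleGraph (Fin n)) [DecidableRel G.Adj]
    (ω : Omega n) : List (Sym2 (Fin n)) :=
  (dfsResult G ω).filterMap fun vp => vp.2.map fun u => s(u, vp.1)

/-- Uniform probability of an event on a finite sample space. -/
noncomputable def Pr {α : Type*} [Fintype α] (p : α → Prop) : ℝ :=
  ((Finset.univ.filter p).card : ℝ) / (Fintype.card α : ℝ)


/-!
Let `x` be the endpoint of `{u, v}` that the search discovers first and `y` the other one.
Until `x` is discovered the search never reads the neighbor order of `x`, so swapping `y` with
the first neighbor of `x` in that order changes nothing before `x`, and right after `x` the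
search discovers `y` from `x`: the edge is in the tree. The modified sample, together with the
former position of `y` in the order of `x` (less than `deg x ≤ max (deg u) (deg v)`), determines
the original sample, so at least a `1 / max (deg u) (deg v)` fraction of the samples put the
edge in the tree.
-/

section DFS

variable {n : ℕ} (adj : Fin n → List (Fin n))

def dfsPush (v : Fin n) : List (Fin n × Option (Fin n)) :=
  (adj v).map fun w => (w, some v)

theorem dfsRun_succ_cons (fuel : ℕ) (v : Fin n) (p : Option (Fin n))
    (stack : List (Fin n × Option (Fin n))) (visited : List (Fin n)) :
    dfsRun adj (fuel + 1) ((v, p) :: stack) visited =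
      if v ∈ visited then dfsRun adj fuel stack visited
      else (v, p) :: dfsRun adj fuel (dfsPush adj v ++ stack) (v :: visited) :=
  rfl

/-- Every step of `dfsRun` decreases this quantity, so it bounds the fuel the search needs. -/
def dfsPotential (stack : List (Fin n × Option (Fin n))) (visited : List (Fin n)) : ℕ :=
  stack.length + ∑ w with w ∉ visited, (1 + (adj w).length)

theorem dfsPotential_cons (v : Fin n) (p : Option (Fin n))
    (stack : List (Fin n × Option (Fin n))) (visited : List (Fin n)) :
    dfsPotential adj ((v, p) :: stack) visited = dfsPotential adj stack visited + 1 := by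
  simp only [dfsPotential, List.length_cons]
  ring

theorem dfsPotential_discover {v : Fin n} (p : Option (Fin n))
    (stack : List (Fin n × Option (Fin n))) {visited : List (Fin n)} (hv : v ∉ visited) :
    dfsPotential adj (dfsPush adj v ++ stack) (v :: visited) + 2 =
      dfsPotential adj ((v, p) :: stack) visited := by
  have hsplit : Finset.univ.filter (· ∉ visited) =
      insert v (Finset.univ.filter (· ∉ v :: visited)) := by
    ext w
    by_cases hw : w = v <;> simp [hw, hv]
  rw [dfsPotential, dfsPotential, hsplit, Finset.sum_insert (by simp)]
  simp only [dfsPush, List.length_append, List.length_map, List.length_cons]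
  ring

theorem dfsPotential_singleton_nil_le (r : Fin n) (hadj : ∀ w, (adj w).length < n) :
    dfsPotential adj [(r, none)] [] ≤ n * n + 1 := by
  calc dfsPotential adj [(r, none)] []
      = 1 + ∑ w : Fin n, (1 + (adj w).length) := by simp [dfsPotential]
    _ ≤ 1 + ∑ _w : Fin n, n := by gcongr with w; have := hadj w; omega
    _ = n * n + 1 := by simp; ring

/-- Up to the discovery of `x`, the search does not look at `adj x`: the run splits there
for every `adj'` that agrees with `adj` away from `x`. -/
theorem dfsRun_split {x : Fin n} :
    ∀ {fuel : ℕ} {stack : List (Fin n × Option (Fin n))} {visited : List (Fin n)},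
      x ∉ visited → x ∈ (dfsRun adj fuel stack visited).map Prod.fst →
      ∃ (pre : List (Fin n × Option (Fin n))) (p : Option (Fin n))
        (stack' : List (Fin n × Option (Fin n))) (fuel' : ℕ),
        x ∉ pre.map Prod.fst ∧ fuel ≤ fuel' + dfsPotential adj stack visited ∧
        ∀ adj' : Fin n → List (Fin n), (∀ z, z ≠ x → adj' z = adj z) →
          dfsRun adj' fuel stack visited =
            pre ++ (x, p) :: dfsRun adj' fuel' (dfsPush adj' x ++ stack')
              (x :: ((pre.map Prod.fst).reverse ++ visited))
  | 0, _, _, _, hmem => by simp [dfsRun] at hmem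
  | _ + 1, [], _, _, hmem => by simp [dfsRun] at hmem
  | fuel + 1, (v, q) :: stack, visited, hx, hmem => by
    rw [dfsRun_succ_cons] at hmem
    by_cases hv : v ∈ visited
    · rw [if_pos hv] at hmem
      obtain ⟨pre, p, stack', fuel', hpre, hfuel, hrun⟩ := dfsRun_split hx hmem
      refine ⟨pre, p, stack', fuel', hpre, ?_, fun adj' hadj' => ?_⟩
      · rw [dfsPotential_cons]; omega
      · rw [dfsRun_succ_cons, if_pos hv, hrun adj' hadj']
    by_cases hvx : v = x
    · subst hvx
      refine ⟨[], q, stack, fuel, by simp, ?_, fun adj' _ => ?_⟩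
      · rw [dfsPotential_cons]; omega
      · simp [dfsRun_succ_cons, hv]
    rw [if_neg hv, List.map_cons, List.mem_cons] at hmem
    have hx' : x ∉ v :: visited := by simp [hx, Ne.symm hvx]
    obtain ⟨pre, p, stack', fuel', hpre, hfuel, hrun⟩ :=
      dfsRun_split hx' (hmem.resolve_left (Ne.symm hvx))
    refine ⟨(v, q) :: pre, p, stack', fuel', by simp [hpre, Ne.symm hvx], ?_,
      fun adj' hadj' => ?_⟩
    · have := dfsPotential_discover adj q stack hv; omega
    · rw [dfsRun_succ_cons, if_neg hv, dfsPush, hadj' v hvx, ← dfsPush, hrun adj' hadj']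
      simp

/-- With enough fuel the search is complete. -/
theorem dfsRun_closed {b : Fin n} :
    ∀ {fuel : ℕ} {stack : List (Fin n × Option (Fin n))} {visited : List (Fin n)},
      dfsPotential adj stack visited ≤ fuel →
      (b ∈ stack.map Prod.fst ∨
        ∃ a ∈ (dfsRun adj fuel stack visited).map Prod.fst, b ∈ adj a) →
      b ∈ visited ∨ b ∈ (dfsRun adj fuel stack visited).map Prod.fst
  | 0, [], _, _, hb | _ + 1, [], _, _, hb => by simp [dfsRun] at hb
  | 0, _ :: _, _, hfuel, _ => by simp [dfsPotential] at hfuel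
  | fuel + 1, (v, q) :: stack, visited, hfuel, hb => by
    rw [dfsRun_succ_cons] at hb ⊢
    by_cases hv : v ∈ visited
    · rw [if_pos hv] at hb ⊢
      rw [dfsPotential_cons] at hfuel
      simp only [List.map_cons, List.mem_cons] at hb
      rcases hb with (rfl | hb) | hb
      · exact Or.inl hv
      · exact dfsRun_closed (by omega) (Or.inl hb)
      · exact dfsRun_closed (by omega) (Or.inr hb)
    rw [if_neg hv] at hb ⊢
    have hfuel' := dfsPotential_discover adj q stack hv
    have hrec := dfsRun_closed (b := b) (fuel := fuel) (stack := dfsPush adj v ++ stack)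
      (visited := v :: visited) (by omega)
    simp only [List.map_cons, List.mem_cons, List.map_append, List.mem_append] at hb hrec ⊢
    rcases hb with (rfl | hb) | ⟨a, rfl | ha, hba⟩
    · exact Or.inr (Or.inl rfl)
    · rcases hrec (Or.inl (Or.inr hb)) with (rfl | h) | h <;> tauto
    · rcases hrec (Or.inl (Or.inl (by simpa [dfsPush] using hba))) with (rfl | h) | h <;> tauto
    · rcases hrec (Or.inr ⟨a, ha, hba⟩) with (rfl | h) | h <;> tauto

end DFS

section NbrList

variable {n : ℕ} {G : SimpleGraph (Fin n)} [DecidableRel G.Adj]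

theorem mem_nbrList {ρ : Equiv.Perm (Fin n)} {x w : Fin n} :
    w ∈ nbrList G ρ x ↔ G.Adj x w := by
  simp [nbrList]

theorem nbrList_length (ρ : Equiv.Perm (Fin n)) (x : Fin n) :
    (nbrList G ρ x).length = G.degree x := by
  simp [nbrList, Finset.card_image_of_injective _ ρ.injective]

theorem nbrList_mul {ρ τ : Equiv.Perm (Fin n)} {x : Fin n}
    (hτ : ∀ w, G.Adj x (τ w) ↔ G.Adj x w) :
    nbrList G (ρ * τ) x = (nbrList G ρ x).map τ.symm := by
  have himage : (G.neighborFinset x).image τ = G.neighborFinset x := by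
    ext w
    simp only [Finset.mem_image, SimpleGraph.mem_neighborFinset]
    exact ⟨fun ⟨a, ha, hw⟩ => hw ▸ (hτ a).2 ha,
      fun hw => ⟨τ.symm w, by rwa [← hτ, Equiv.apply_symm_apply], τ.apply_symm_apply w⟩⟩
  simp only [nbrList, Equiv.Perm.coe_mul, ← Finset.image_image, himage, List.map_map]
  rfl

theorem nbrList_mul_swap {ρ : Equiv.Perm (Fin n)} {x a b : Fin n} (ha : G.Adj x a)
    (hb : G.Adj x b) :
    nbrList G (ρ * Equiv.swap a b) x = (nbrList G ρ x).map (Equiv.swap a b) := by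
  refine nbrList_mul fun w => ?_
  rcases eq_or_ne w a with rfl | hwa
  · simp [ha, hb]
  rcases eq_or_ne w b with rfl | hwb
  · simp [ha, hb]
  rw [Equiv.swap_apply_of_ne_of_ne hwa hwb]

theorem exists_nbrList_eq_cons {x y : Fin n} (hxy : G.Adj x y) (ρ : Equiv.Perm (Fin n)) :
    ∃ a rest, G.Adj x a ∧ nbrList G ρ x = a :: rest := by
  obtain ⟨a, rest, hL⟩ := List.exists_cons_of_ne_nil (List.ne_nil_of_mem (mem_nbrList.2 hxy))
  exact ⟨a, rest, mem_nbrList.1 (hL ▸ List.mem_cons_self), hL⟩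

end NbrList

section Reorder

variable {n : ℕ} (G : SimpleGraph (Fin n)) [DecidableRel G.Adj]

noncomputable def bringToFront (x y : Fin n) (ρ : Equiv.Perm (Fin n)) : Equiv.Perm (Fin n) :=
  ρ * Equiv.swap ((nbrList G ρ x).headD y) y

noncomputable def sendBack (x y : Fin n) (k : ℕ) (ρ : Equiv.Perm (Fin n)) :
    Equiv.Perm (Fin n) :=
  ρ * Equiv.swap ((nbrList G ρ x).getD k y) y

variable {G}

theorem nbrList_bringToFront {x y : Fin n} (hxy : G.Adj x y) (ρ : Equiv.Perm (Fin n)) :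
    ∃ rest, nbrList G (bringToFront G x y ρ) x = y :: rest := by
  obtain ⟨a, rest, ha, hL⟩ := exists_nbrList_eq_cons hxy ρ
  refine ⟨rest.map (Equiv.swap a y), ?_⟩
  rw [bringToFront, hL, List.headD_cons, nbrList_mul_swap ha hxy, hL]
  simp

theorem sendBack_bringToFront {x y : Fin n} (hxy : G.Adj x y) (ρ : Equiv.Perm (Fin n)) :
    sendBack G x y ((nbrList G ρ x).idxOf y) (bringToFront G x y ρ) = ρ := by
  set L := nbrList G ρ x
  obtain ⟨a, rest, ha, hL⟩ := exists_nbrList_eq_cons hxy ρ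
  have hk : L.idxOf y < L.length := List.idxOf_lt_length_iff.2 (mem_nbrList.2 hxy)
  have hfront : nbrList G (bringToFront G x y ρ) x = L.map (Equiv.swap a y) := by
    rw [bringToFront, hL, List.headD_cons, nbrList_mul_swap ha hxy]
  have hold : (nbrList G (bringToFront G x y ρ) x).getD (L.idxOf y) y = a := by
    rw [List.getD_eq_getElem _ _ (by simpa [hfront] using hk)]
    simp [hfront, List.getElem_idxOf hk]
  rw [sendBack, hold, bringToFront, hL, List.headD_cons, Equiv.mul_swap_mul_self]

end Reorder

section Sample

variable {n : ℕ} (G : SimpleGraph (Fin n)) [DecidableRel G.Adj]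

noncomputable def nbrAdj (ω : Omega n) (v : Fin n) : List (Fin n) := nbrList G (ω.2 v) v

noncomputable def discoveryOrder (ω : Omega n) : List (Fin n) := (dfsResult G ω).map Prod.fst

theorem dfsResult_eq_dfsRun (ω : Omega n) :
    dfsResult G ω = dfsRun (nbrAdj G ω) (n * n + n + 1) [(ω.1, none)] [] :=
  rfl

theorem dfsPotential_nbrAdj_le (ω : Omega n) :
    dfsPotential (nbrAdj G ω) [(ω.1, none)] [] ≤ n * n + 1 :=
  dfsPotential_singleton_nil_le _ _ fun w => by
    simpa [nbrAdj, nbrList_length] using G.degree_lt_card_verts w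

variable {G}

theorem mem_discoveryOrder (hconn : G.Connected) (ω : Omega n) (w : Fin n) :
    w ∈ discoveryOrder G ω := by
  have hfuel : dfsPotential (nbrAdj G ω) [(ω.1, none)] [] ≤ n * n + n + 1 := by
    have := dfsPotential_nbrAdj_le G ω; omega
  have hroot : ω.1 ∈ discoveryOrder G ω :=
    (dfsRun_closed _ hfuel (Or.inl (by simp))).resolve_left List.not_mem_nil
  have hclosed : ∀ a b, a ∈ discoveryOrder G ω → G.Adj a b → b ∈ discoveryOrder G ω :=
    fun a _ ha hab =>
      (dfsRun_closed _ hfuel (Or.inr ⟨a, ha, mem_nbrList.2 hab⟩)).resolve_left List.not_mem_nil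
  induction (SimpleGraph.reachable_iff_reflTransGen _ _).1 (hconn.preconnected ω.1 w) with
  | refl => exact hroot
  | tail _ hab ih => exact hclosed _ _ ih hab

/-- Changing the permutations only at `x` changes the search only after `x` is discovered;
the remaining fuel is at least `1` because it started `n` above the potential. -/
theorem dfsResult_split (hconn : G.Connected) (ω : Omega n) (x : Fin n) :
    ∃ (pre : List (Fin n × Option (Fin n))) (p : Option (Fin n))
      (stack : List (Fin n × Option (Fin n))) (fuel : ℕ),
      x ∉ pre.map Prod.fst ∧
      ∀ ω' : Omega n, ω'.1 = ω.1 → (∀ z, z ≠ x → ω'.2 z = ω.2 z) →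
        dfsResult G ω' = pre ++ (x, p) :: dfsRun (nbrAdj G ω') (fuel + 1)
          (dfsPush (nbrAdj G ω') x ++ stack) (x :: (pre.map Prod.fst).reverse) := by
  obtain ⟨pre, p, stack, fuel', hpre, hfuel, hrun⟩ :=
    dfsRun_split (nbrAdj G ω) List.not_mem_nil (mem_discoveryOrder hconn ω x)
  have hpot := dfsPotential_nbrAdj_le G ω
  have hn : 0 < n := x.pos
  obtain ⟨fuel, rfl⟩ : ∃ fuel, fuel' = fuel + 1 := by
    generalize n * n = m at hfuel hpot
    exact ⟨fuel' - 1, by omega⟩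
  refine ⟨pre, p, stack, fuel, hpre, fun ω' hroot hω' => ?_⟩
  rw [dfsResult_eq_dfsRun, hroot, hrun _ fun z hz => by simp only [nbrAdj, hω' z hz],
    List.append_nil]

theorem dfsResult_bringToFront (hconn : G.Connected) {ω : Omega n} {x y : Fin n}
    (hxy : G.Adj x y) (hle : (discoveryOrder G ω).idxOf x ≤ (discoveryOrder G ω).idxOf y) :
    ∃ (pre : List (Fin n × Option (Fin n))) (p : Option (Fin n))
      (rest : List (Fin n × Option (Fin n))),
      x ∉ pre.map Prod.fst ∧ y ∉ pre.map Prod.fst ∧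
      dfsResult G (ω.1, Function.update ω.2 x (bringToFront G x y (ω.2 x))) =
        pre ++ (x, p) :: (y, some x) :: rest := by
  obtain ⟨pre, p, stack, fuel, hxpre, hsplit⟩ := dfsResult_split hconn ω x
  have hypre : y ∉ pre.map Prod.fst := by
    intro hy
    have hyidx := List.idxOf_lt_length_iff.2 hy
    simp only [discoveryOrder, hsplit ω rfl fun _ _ => rfl, List.map_append, List.map_cons,
      List.idxOf_append_of_notMem hxpre, List.idxOf_append_of_mem hy, List.idxOf_cons_self,
      add_zero] at hle
    omega
  obtain ⟨rest, hfront⟩ := nbrList_bringToFront hxy (ω.2 x)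
  set ω' : Omega n := (ω.1, Function.update ω.2 x (bringToFront G x y (ω.2 x)))
  have hx' : nbrAdj G ω' x = y :: rest := by simp [ω', nbrAdj, hfront]
  rw [hsplit ω' rfl fun z hz => Function.update_of_ne hz _ _, dfsPush, hx', List.map_cons,
    List.cons_append, dfsRun_succ_cons, if_neg (by simp [hxy.ne.symm, hypre])]
  exact ⟨pre, p, _, hxpre, hypre, rfl⟩

end Sample

section Promote

variable {n : ℕ} (G : SimpleGraph (Fin n)) [DecidableRel G.Adj]

noncomputable def orient (ω : Omega n) (u v : Fin n) : Fin n × Fin n :=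
  if (discoveryOrder G ω).idxOf u ≤ (discoveryOrder G ω).idxOf v then (u, v) else (v, u)

noncomputable def promote (u v : Fin n) (ω : Omega n) : Omega n :=
  (ω.1, Function.update ω.2 (orient G ω u v).1
    (bringToFront G (orient G ω u v).1 (orient G ω u v).2 (ω.2 (orient G ω u v).1)))

noncomputable def promoteIndex (u v : Fin n) (ω : Omega n) : ℕ :=
  (nbrList G (ω.2 (orient G ω u v).1) (orient G ω u v).1).idxOf (orient G ω u v).2

noncomputable def demote (u v : Fin n) (q : Omega n × ℕ) : Omega n :=
  (q.1.1, Function.update q.1.2 (orient G q.1 u v).1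
    (sendBack G (orient G q.1 u v).1 (orient G q.1 u v).2 q.2 (q.1.2 (orient G q.1 u v).1)))

theorem orient_eq_or (ω : Omega n) (u v : Fin n) :
    orient G ω u v = (u, v) ∨ orient G ω u v = (v, u) := by
  unfold orient
  split_ifs <;> simp

theorem idxOf_orient_le (ω : Omega n) (u v : Fin n) :
    (discoveryOrder G ω).idxOf (orient G ω u v).1 ≤
      (discoveryOrder G ω).idxOf (orient G ω u v).2 := by
  unfold orient
  split_ifs with h
  exacts [h, le_of_not_ge h]

variable {G}

theorem orient_adj {u v : Fin n} (huv : G.Adj u v) (ω : Omega n) :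
    G.Adj (orient G ω u v).1 (orient G ω u v).2 := by
  rcases orient_eq_or G ω u v with h | h <;> rw [h]
  exacts [huv, huv.symm]

theorem orient_eq_of_idxOf_lt {ω ω' : Omega n} {u v : Fin n}
    (h : (discoveryOrder G ω').idxOf (orient G ω u v).1 <
      (discoveryOrder G ω').idxOf (orient G ω u v).2) :
    orient G ω' u v = orient G ω u v := by
  rcases orient_eq_or G ω u v with he | he <;> rw [he] at h ⊢ <;> unfold orient
  · rw [if_pos h.le]
  · rw [if_neg (not_le.2 h)]

theorem dfsResult_promote (hconn : G.Connected) {u v : Fin n} (huv : G.Adj u v) (ω : Omega n) :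
    ∃ (pre : List (Fin n × Option (Fin n))) (p : Option (Fin n))
      (rest : List (Fin n × Option (Fin n))),
      (orient G ω u v).1 ∉ pre.map Prod.fst ∧ (orient G ω u v).2 ∉ pre.map Prod.fst ∧
      dfsResult G (promote G u v ω) = pre ++ ((orient G ω u v).1, p) ::
        ((orient G ω u v).2, some (orient G ω u v).1) :: rest :=
  dfsResult_bringToFront hconn (orient_adj huv ω) (idxOf_orient_le G ω u v)

theorem orient_promote (hconn : G.Connected) {u v : Fin n} (huv : G.Adj u v) (ω : Omega n) :
    orient G (promote G u v ω) u v = orient G ω u v := by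
  obtain ⟨pre, p, rest, hx, hy, h⟩ := dfsResult_promote hconn huv ω
  apply orient_eq_of_idxOf_lt
  simp [discoveryOrder, h, List.idxOf_append_of_notMem hx, List.idxOf_append_of_notMem hy,
    (orient_adj huv ω).ne]

theorem mem_dfsTreeEdges_promote (hconn : G.Connected) {u v : Fin n} (huv : G.Adj u v)
    (ω : Omega n) : s(u, v) ∈ dfsTreeEdges G (promote G u v ω) := by
  obtain ⟨pre, p, rest, -, -, h⟩ := dfsResult_promote hconn huv ω
  rw [dfsTreeEdges, h, List.mem_filterMap]
  refine ⟨((orient G ω u v).2, some (orient G ω u v).1), by simp, ?_⟩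
  rcases orient_eq_or G ω u v with he | he <;> simp [he, Sym2.eq_swap]

theorem demote_promote (hconn : G.Connected) {u v : Fin n} (huv : G.Adj u v) :
    Function.LeftInverse (demote G u v) fun ω =>
      (promote G u v ω, promoteIndex G u v ω) := by
  intro ω
  simp only [demote, orient_promote hconn huv ω]
  simp only [promote, promoteIndex, Function.update_self,
    sendBack_bringToFront (orient_adj huv ω), Function.update_idem, Function.update_eq_self]

theorem promoteIndex_lt {u v : Fin n} (huv : G.Adj u v) (ω : Omega n) :
    promoteIndex G u v ω < max (G.degree u) (G.degree v) := by
  have hlt : promoteIndex G u v ω < G.degree (orient G ω u v).1 := by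
    rw [promoteIndex, ← nbrList_length (ω.2 (orient G ω u v).1)]
    exact List.idxOf_lt_length_iff.2 (mem_nbrList.2 (orient_adj huv ω))
  have hx : (orient G ω u v).1 = u ∨ (orient G ω u v).1 = v := by
    rcases orient_eq_or G ω u v with he | he <;> simp [he]
  rcases hx with hx | hx <;> rw [hx] at hlt <;> omega

end Promote

theorem one_div_le_Pr_of_injective {α : Type*} [Fintype α] [Nonempty α] {p : α → Prop}
    {m : ℕ} (hm : 0 < m) (f : α → α) (k : α → ℕ) (hf : ∀ a, p (f a)) (hk : ∀ a, k a < m)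
    (hinj : Function.Injective fun a => (f a, k a)) : 1 / (m : ℝ) ≤ Pr p := by
  have hcard : Fintype.card α ≤ (Finset.univ.filter p).card * m := by
    rw [← Finset.card_range m, ← Finset.card_product, ← Finset.card_univ]
    exact Finset.card_le_card_of_injOn _ (fun a _ => by simp [hf a, hk a]) hinj.injOn
  rw [Pr, div_le_div_iff₀ (by positivity) (by simp [Fintype.card_pos]), one_mul]
  exact_mod_cast hcard

theorem dfs_edge_in_tree_prob_ge {n : ℕ} (G : SimpleGraph (Fin n)) [DecidableRel G.Adj]
    (hconn : G.Connected) (u v : Fin n) (huv : G.Adj u v) :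
    (1 : ℝ) / (max (G.degree u) (G.degree v) : ℕ) ≤
        Pr (fun ω : Omega n => s(u, v) ∈ dfsTreeEdges G ω) ∧
      (1 : ℝ) / ((Finset.univ.sup fun w => G.degree w : ℕ) : ℝ) ≤
        Pr (fun ω : Omega n => s(u, v) ∈ dfsTreeEdges G ω) := by
  have hdeg : 0 < max (G.degree u) (G.degree v) :=
    lt_max_of_lt_left ((G.degree_pos_iff_exists_adj u).2 ⟨v, huv⟩)
  have : Nonempty (Omega n) := ⟨(u, 1)⟩
  have hmax := one_div_le_Pr_of_injective (p := fun ω => s(u, v) ∈ dfsTreeEdges G ω) hdeg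
    (promote G u v) (promoteIndex G u v) (mem_dfsTreeEdges_promote hconn huv)
    (promoteIndex_lt huv) (demote_promote hconn huv).injective
  refine ⟨hmax, le_trans ?_ hmax⟩
  gcongr
  exact max_le (Finset.le_sup (f := fun w => G.degree w) (Finset.mem_univ u))
    (Finset.le_sup (f := fun w => G.degree w) (Finset.mem_univ v))

end RSNN
end

section
/- The WWL refinement is monotone in the maximum walk length: for ℓ ≤ ℓ' and any round t, the coloring π^(t) produced by WWL^ℓ is refined by the coloring produced by WWL^{ℓ'}; that is, any two vertices distinguished by WWL^ℓ at round t are also distinguished by WWL^{ℓ'} at round t. -/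
/-! The `WWL^ℓ` colour of a vertex is a function of its `WWL^{ℓ'}` colour: discarding, recursively
in every round, the walk sequences of walks longer than `ℓ` turns the one colouring into the
other, so equal `WWL^{ℓ'}` colours give equal `WWL^ℓ` colours. -/

open scoped Classical

namespace RSNN

/-- The type of (free, injectively-hashed) WWL colors after `t` rounds, starting from
initial colors in `σ`: round `t+1` pairs the previous color with a multiset of colored
walk sequences.  Using the free pairing construction is equivalent to any injective
`Hash`. -/
def ColorType (σ : Type) : ℕ → Type
  | 0 => σ
  | t + 1 => ColorType σ t × Multiset (List (ColorType σ t))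

variable {V : Type} [Fintype V] [DecidableEq V]

/-- The multiset of `c`-colored vertex sequences `(c w₀, …, c w_L)` over all walks
`(w₀, …, w_L)` in `G` of length `1 ≤ L ≤ ℓ` terminating at `u`. -/
noncomputable def walkColors (G : SimpleGraph V) [DecidableRel G.Adj] {σ : Type} {t : ℕ}
    (ℓ : ℕ) (c : V → ColorType σ t) (u : V) : Multiset (List (ColorType σ t)) :=
  ∑ L ∈ Finset.Icc 1 ℓ, ∑ w0 : V,
    (G.finsetWalkLength L w0 u).val.map fun p => p.support.map c

/-- The Walk Weisfeiler–Lehman refinement `WWL^ℓ`: round `t+1` (injectively) hashes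
the current color of `u` together with the multiset of colored walk sequences of all
walks of length `1 … ℓ` terminating at `u`. -/
noncomputable def WWL (G : SimpleGraph V) [DecidableRel G.Adj] {σ : Type}
    (ℓ : ℕ) (π0 : V → σ) : (t : ℕ) → V → ColorType σ t
  | 0 => π0
  | t + 1 => fun u => (WWL G ℓ π0 t u, walkColors G ℓ (WWL G ℓ π0 t) u)

/-- A walk of length `L` has `L + 1` vertices, hence the bound `ℓ + 1`. -/
noncomputable def trunc {σ : Type} (ℓ : ℕ) : (t : ℕ) → ColorType σ t → ColorType σ t
  | 0, c => c
  | t + 1, (c, m) => (trunc ℓ t c, (m.filter (·.length ≤ ℓ + 1)).map (List.map (trunc ℓ t)))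

section
variable (G : SimpleGraph V) [DecidableRel G.Adj] {σ : Type} {t : ℕ}

theorem walkColors_map (ℓ : ℕ) (f : ColorType σ t → ColorType σ t) (c : V → ColorType σ t)
    (u : V) : (walkColors G ℓ c u).map (List.map f) = walkColors G ℓ (f ∘ c) u := by
  rw [walkColors, ← Multiset.coe_mapAddMonoidHom, map_sum]
  simp [walkColors, map_sum]

theorem walkColors_filter_length_le {ℓ ℓ' : ℕ} (hℓ : ℓ ≤ ℓ') (c : V → ColorType σ t) (u : V) :
    (walkColors G ℓ' c u).filter (·.length ≤ ℓ + 1) = walkColors G ℓ c u := by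
  have block (L : ℕ) (w₀ : V) :
      ((G.finsetWalkLength L w₀ u).val.map fun p => p.support.map c).filter (·.length ≤ ℓ + 1) =
        if L ≤ ℓ then (G.finsetWalkLength L w₀ u).val.map fun p => p.support.map c else 0 := by
    have length_eq : ∀ q ∈ (G.finsetWalkLength L w₀ u).val.map fun p => p.support.map c,
        q.length = L + 1 := by
      simp +contextual [SimpleGraph.mem_finsetWalkLength_iff]
    split_ifs with hL
    · exact Multiset.filter_eq_self.mpr fun q hq => by have := length_eq q hq; omega
    · exact Multiset.filter_eq_nil.mpr fun q hq => by have := length_eq q hq; omega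
  let filterHom : Multiset (List (ColorType σ t)) →+ Multiset (List (ColorType σ t)) :=
    { toFun := Multiset.filter (·.length ≤ ℓ + 1)
      map_zero' := Multiset.filter_zero _
      map_add' := Multiset.filter_add _ }
  change filterHom _ = _
  simp only [walkColors, map_sum]
  change ∑ L ∈ _, ∑ w₀, Multiset.filter _ _ = _
  simp only [block, Finset.sum_ite_irrel, Finset.sum_const_zero, ← Finset.sum_filter]
  congr 1
  ext L
  simp only [Finset.mem_filter, Finset.mem_Icc]
  omega

theorem trunc_WWL {ℓ ℓ' : ℕ} (hℓ : ℓ ≤ ℓ') (π0 : V → σ) :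
    ∀ t u, trunc ℓ t (WWL G ℓ' π0 t u) = WWL G ℓ π0 t u
  | 0, _ => rfl
  | t + 1, u => by
    have ih : trunc ℓ t ∘ WWL G ℓ' π0 t = WWL G ℓ π0 t := funext (trunc_WWL hℓ π0 t)
    change trunc ℓ (t + 1) (WWL G ℓ' π0 t u, walkColors G ℓ' (WWL G ℓ' π0 t) u) = _
    rw [trunc, walkColors_filter_length_le G hℓ, walkColors_map, ih, trunc_WWL hℓ π0 t]
    rfl

end

/-- `WWL` is monotone in the maximum walk length: for `ℓ ≤ ℓ'` and
any round `t`, vertices distinguished by `WWL^ℓ` at round `t` are also distinguished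
by `WWL^{ℓ'}` at round `t` (equivalently, equal `WWL^{ℓ'}` colors imply equal
`WWL^ℓ` colors). -/
theorem WWL_monotone_length (G : SimpleGraph V) [DecidableRel G.Adj] {σ : Type}
    {ℓ ℓ' : ℕ} (hll' : ℓ ≤ ℓ') (π0 : V → σ) (t : ℕ) (u v : V)
    (h : WWL G ℓ' π0 t u = WWL G ℓ' π0 t v) :
    WWL G ℓ π0 t u = WWL G ℓ π0 t v := by
  rw [← trunc_WWL G hll' π0 t, h, trunc_WWL G hll' π0 t]

end RSNN
end

section
/- For every ℓ ≥ 1, the stable coloring of WWL^ℓ (walk-based Weisfeiler–Lehman with walks of length up to ℓ) has exactly the same distinguishing power as the stable coloring of classical 1-WL: two vertices (or two graphs, via color multisets) are distinguished by the stabilized WWL^ℓ if and only if they are distinguished by stabilized 1-WL. -/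
open scoped Classical

namespace RSNN

variable {V : Type} [Fintype V] [DecidableEq V]

/-- The type of (free, injectively-hashed) 1-WL colors after `t` rounds. -/
def WLColorType (σ : Type) : ℕ → Type
  | 0 => σ
  | t + 1 => WLColorType σ t × Multiset (WLColorType σ t)

/-- The 1-dimensional Weisfeiler–Lehman color refinement: round `t+1` (injectively)
hashes the current color of `u` with the multiset of its neighbors' colors. -/
noncomputable def WL {V : Type} [Fintype V] [DecidableEq V]
    (G : SimpleGraph V) [DecidableRel G.Adj] {σ : Type} (π0 : V → σ) :
    (t : ℕ) → V → WLColorType σ t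
  | 0 => π0
  | t + 1 => fun u => (WL G π0 t u, (G.neighborFinset u).val.map (WL G π0 t))


/-!
Both refinements are decoded from each other by maps that do not depend on the graph.
The WL colour of `u` at round `s + L` is its depth-`L` unfolding tree, whose root-to-leaf
paths are the walks of length `L` starting at `u`, coloured at round `s`; reversing them gives
the walks terminating at `u`. As one `WWL^ℓ` round reads walks of length at most `ℓ`, WL at
round `ℓ * t` determines `WWL^ℓ` at round `t`.
Conversely, for `ℓ ≥ 1` the walks of length one terminating at `u` list the neighbours of `u`,
so `WWL^ℓ` at round `t` determines WL at round `t`. Graph independence of the decoders lets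
them transport colour multisets between different graphs as well.
-/

def WLColorType.restrict {σ : Type} {a b : ℕ} (h : a ≤ b) :
    WLColorType σ b → WLColorType σ a :=
  Nat.leRecOn (C := fun k => WLColorType σ k → WLColorType σ a) h (fun f c => f c.1) id

lemma restrict_WL {σ : Type} (G : SimpleGraph V) [DecidableRel G.Adj] (π0 : V → σ)
    {a b : ℕ} (h : a ≤ b) (u : V) : WLColorType.restrict h (WL G π0 b u) = WL G π0 a u := by
  induction b, h using Nat.le_induction with
  | base => rw [WLColorType.restrict, Nat.leRecOn_self]; rfl
  | succ b hab ih => rw [WLColorType.restrict, Nat.leRecOn_succ hab]; exact ih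

lemma Multiset.map_finsetSum {ι α β : Type*} (s : Finset ι) (f : ι → Multiset α) (g : α → β) :
    (∑ i ∈ s, f i).map g = ∑ i ∈ s, (f i).map g :=
  map_sum (Multiset.mapAddMonoidHom g) f s

lemma Multiset.finsetSum_bind {ι α β : Type*} (s : Finset ι) (f : ι → Multiset α)
    (g : α → Multiset β) : (∑ i ∈ s, f i).bind g = ∑ i ∈ s, (f i).bind g := by
  induction s using Finset.cons_induction with
  | empty => simp
  | cons a s ha ih => rw [Finset.sum_cons, Finset.sum_cons, Multiset.add_bind, ih]

section Walks

open SimpleGraph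

variable (G : SimpleGraph V) [DecidableRel G.Adj] {α : Type}

noncomputable def walkColorsFrom (c : V → α) (L : ℕ) (u : V) : Multiset (List α) :=
  ∑ v : V, (G.finsetWalkLength L u v).val.map fun p => p.support.map c

lemma finsetWalkLength_succ_val (L : ℕ) (u w : V) :
    (G.finsetWalkLength (L + 1) u w).val =
      (Finset.univ : Finset (G.neighborSet u)).val.bind fun x =>
        (G.finsetWalkLength L x w).val.map fun p => Walk.cons x.2 p := by
  rw [finsetWalkLength, Finset.biUnion_val, Multiset.dedup_eq_self.mpr]
  · rfl
  refine Multiset.nodup_bind.mpr ⟨fun x _ => Finset.nodup _, ?_⟩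
  refine (Finset.nodup _).pairwise fun x _ y _ hxy => Multiset.disjoint_left.mpr ?_
  simp only [Finset.mem_val, Finset.mem_map]
  rintro _ ⟨p, -, rfl⟩ ⟨q, -, h⟩
  exact hxy (Subtype.ext (Walk.cons.inj h).1.symm)

lemma finsetWalkLength_eq_map_reverse (L : ℕ) (u w : V) :
    G.finsetWalkLength L w u =
      (G.finsetWalkLength L u w).map ⟨Walk.reverse, Walk.reverse_injective⟩ := by
  ext p
  simp only [mem_finsetWalkLength_iff, Finset.mem_map, Function.Embedding.coeFn_mk]
  exact ⟨fun hp => ⟨p.reverse, by simpa, p.reverse_reverse⟩, by rintro ⟨q, hq, rfl⟩; simpa⟩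

lemma walkColorsFrom_zero (c : V → α) (u : V) : walkColorsFrom G c 0 u = {[c u]} := by
  rw [walkColorsFrom, Finset.sum_eq_single u]
  · simp [finsetWalkLength]
  · intro v _ hvu
    simp [finsetWalkLength, Ne.symm hvu]
  · simp

lemma walkColorsFrom_succ (c : V → α) (L : ℕ) (u : V) :
    walkColorsFrom G c (L + 1) u =
      ∑ v ∈ G.neighborFinset u, (walkColorsFrom G c L v).map (c u :: ·) := by
  calc walkColorsFrom G c (L + 1) u
      = ∑ w : V, ∑ x : G.neighborSet u,
          (G.finsetWalkLength L x w).val.map fun p => c u :: p.support.map c := by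
        refine Finset.sum_congr rfl fun w _ => ?_
        rw [finsetWalkLength_succ_val, Multiset.map_bind]
        refine Finset.sum_congr rfl fun x _ => ?_
        rw [Multiset.map_map]
        exact Multiset.map_congr rfl fun p _ => rfl
    _ = ∑ x : G.neighborSet u, (walkColorsFrom G c L x).map (c u :: ·) := by
        rw [Finset.sum_comm]
        simp only [walkColorsFrom, Multiset.map_finsetSum, Multiset.map_map, Function.comp_def]
    _ = ∑ v ∈ G.neighborFinset u, (walkColorsFrom G c L v).map (c u :: ·) :=
        (Finset.sum_subtype (p := (· ∈ G.neighborSet u)) _ (G.mem_neighborFinset u)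
          fun v => (walkColorsFrom G c L v).map (c u :: ·)).symm

lemma walkColorsFrom_comp {β : Type} (c : V → α) (g : α → β) (L : ℕ) (u : V) :
    walkColorsFrom G (g ∘ c) L u = (walkColorsFrom G c L u).map (List.map g) := by
  simp only [walkColorsFrom, Multiset.map_finsetSum, Multiset.map_map, Function.comp_def,
    List.map_map]

lemma length_of_mem_walkColorsFrom {c : V → α} {L : ℕ} {u : V} {l : List α}
    (hl : l ∈ walkColorsFrom G c L u) : l.length = L + 1 := by
  simp only [walkColorsFrom, Multiset.mem_sum, Multiset.mem_map, Finset.mem_val,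
    mem_finsetWalkLength_iff] at hl
  obtain ⟨v, -, p, hp, rfl⟩ := hl
  simp [hp]

lemma walkColors_eq_sum_walkColorsFrom {σ : Type} {t : ℕ} (ℓ : ℕ) (c : V → ColorType σ t)
    (u : V) :
    walkColors G ℓ c u = ∑ L ∈ Finset.Icc 1 ℓ, (walkColorsFrom G c L u).map List.reverse := by
  refine Finset.sum_congr rfl fun L _ => ?_
  simp only [walkColorsFrom, Multiset.map_finsetSum, Multiset.map_map]
  refine Finset.sum_congr rfl fun w _ => ?_
  rw [finsetWalkLength_eq_map_reverse G L u w, Finset.map_val, Multiset.map_map]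
  exact Multiset.map_congr rfl fun p _ => by simp [Walk.support_reverse]

end Walks

def WLColorType.walks {σ : Type} (s : ℕ) :
    (L : ℕ) → WLColorType σ (s + L) → Multiset (List (WLColorType σ s))
  | 0, c => {[c]}
  | L + 1, c =>
    c.2.bind fun d => (walks s L d).map (restrict (Nat.le_add_right s (L + 1)) c :: ·)

lemma walks_WL {σ : Type} (G : SimpleGraph V) [DecidableRel G.Adj] (π0 : V → σ) (s L : ℕ)
    (u : V) : WLColorType.walks s L (WL G π0 (s + L) u) = walkColorsFrom G (WL G π0 s) L u := by
  induction L generalizing u with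
  | zero => rw [walkColorsFrom_zero]; rfl
  | succ L ih =>
    rw [walkColorsFrom_succ]
    show ((G.neighborFinset u).val.map (WL G π0 (s + L))).bind _ = _
    rw [Multiset.bind_map, restrict_WL]
    exact Finset.sum_congr rfl fun v _ => by rw [ih]

noncomputable def WLColorType.toWWL {σ : Type} (ℓ : ℕ) :
    (t : ℕ) → WLColorType σ (ℓ * t) → ColorType σ t
  | 0, c => c
  | t + 1, c =>
    (toWWL ℓ t (restrict (Nat.mul_le_mul_left ℓ t.le_succ) c),
      ∑ L ∈ (Finset.Icc 1 ℓ).attach,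
        (walks (ℓ * t) L (restrict (by grind) c)).map
          fun l => (l.map (toWWL ℓ t)).reverse)

lemma toWWL_WL {σ : Type} (G : SimpleGraph V) [DecidableRel G.Adj] (π0 : V → σ) (ℓ t : ℕ)
    (u : V) : WLColorType.toWWL ℓ t (WL G π0 (ℓ * t) u) = WWL G ℓ π0 t u := by
  induction t generalizing u with
  | zero => rfl
  | succ t ih =>
    refine Prod.ext ?_ ?_
    · show WLColorType.toWWL ℓ t (WLColorType.restrict _ (WL G π0 (ℓ * (t + 1)) u)) = _
      rw [restrict_WL, ih]
      rfl
    have hWWL : WWL G ℓ π0 t = WLColorType.toWWL ℓ t ∘ WL G π0 (ℓ * t) :=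
      funext fun v => (ih v).symm
    show ∑ L ∈ (Finset.Icc 1 ℓ).attach, _ = walkColors G ℓ (WWL G ℓ π0 t) u
    rw [walkColors_eq_sum_walkColorsFrom, hWWL,
      ← Finset.sum_attach _ fun L => (walkColorsFrom G _ L u).map List.reverse]
    refine Finset.sum_congr rfl fun L _ => ?_
    rw [restrict_WL, walks_WL, walkColorsFrom_comp, Multiset.map_map]
    rfl

/-- Walks of length one are the colour lists of length two, headed by the neighbour's colour. -/
def pairHead {α β : Type} (f : α → β) : List α → Multiset β
  | [a, _] => {f a}
  | _ => 0

lemma pairHead_eq_zero {α β : Type} (f : α → β) {l : List α} (hl : l.length ≠ 2) :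
    pairHead f l = 0 := by
  rcases l with _ | ⟨a, _ | ⟨b, _ | _⟩⟩ <;> simp_all [pairHead]

lemma walkColors_bind_pairHead {σ β : Type} {t ℓ : ℕ} (hℓ : 1 ≤ ℓ) (G : SimpleGraph V)
    [DecidableRel G.Adj] (c : V → ColorType σ t) (f : ColorType σ t → β) (u : V) :
    (walkColors G ℓ c u).bind (pairHead f) = (G.neighborFinset u).val.map (f ∘ c) := by
  rw [walkColors_eq_sum_walkColorsFrom, Multiset.finsetSum_bind,
    Finset.sum_eq_single_of_mem 1 (by simpa using hℓ)]
  · rw [walkColorsFrom_succ, Multiset.map_finsetSum, Multiset.finsetSum_bind]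
    simp only [walkColorsFrom_zero, Multiset.map_singleton, List.reverse_cons, List.reverse_nil,
      List.nil_append, List.cons_append, Multiset.singleton_bind, pairHead]
    exact Multiset.bind_singleton _ _
  · intro L _ hL
    rw [Multiset.bind_map]
    refine (Multiset.bind_congr fun l hl => pairHead_eq_zero f ?_).trans (Multiset.bind_zero _)
    rw [List.length_reverse, length_of_mem_walkColorsFrom G hl]
    omega

def ColorType.toWL {σ : Type} : (t : ℕ) → ColorType σ t → WLColorType σ t
  | 0, c => c
  | t + 1, c => (toWL t c.1, c.2.bind (pairHead (toWL t)))

lemma toWL_WWL {σ : Type} {ℓ : ℕ} (hℓ : 1 ≤ ℓ) (G : SimpleGraph V) [DecidableRel G.Adj]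
    (π0 : V → σ) (t : ℕ) (u : V) : ColorType.toWL t (WWL G ℓ π0 t u) = WL G π0 t u := by
  induction t generalizing u with
  | zero => rfl
  | succ t ih =>
    refine Prod.ext (ih u) ?_
    show (walkColors G ℓ (WWL G ℓ π0 t) u).bind (pairHead (ColorType.toWL t)) = _
    rw [walkColors_bind_pairHead hℓ]
    exact Multiset.map_congr rfl fun v _ => ih v

lemma map_ne_map_of_decode {ι κ α β : Type*} {s : Multiset ι} {s' : Multiset κ} {a : ι → α}
    {a' : κ → α} {b : ι → β} {b' : κ → β} (f : α → β) (hb : ∀ i, f (a i) = b i)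
    (hb' : ∀ k, f (a' k) = b' k) (h : s.map b ≠ s'.map b') : s.map a ≠ s'.map a' := by
  intro heq
  apply h
  simpa [Multiset.map_map, Function.comp_def, hb, hb'] using congrArg (Multiset.map f) heq

/-- For every `ℓ ≥ 1`, the stable coloring of `WWL^ℓ` has exactly
the same distinguishing power as the stable coloring of classical 1-WL.  Two vertices
are distinguished by the stabilized refinement iff they get different colors at some
round; graphs are compared via the multisets of vertex colors. -/
theorem WWL_stable_equiv_WL_stable (ℓ : ℕ) (hℓ : 1 ≤ ℓ) :
    (∀ (G : SimpleGraph V) [DecidableRel G.Adj] {σ : Type} (π0 : V → σ) (u v : V),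
        (∃ t, WL G π0 t u ≠ WL G π0 t v) ↔ (∃ t, WWL G ℓ π0 t u ≠ WWL G ℓ π0 t v)) ∧
      (∀ (G : SimpleGraph V) [DecidableRel G.Adj]
          {W : Type} [Fintype W] [DecidableEq W] (H : SimpleGraph W) [DecidableRel H.Adj],
        (∃ t, Multiset.map (WL G (fun _ => ()) t) Finset.univ.val ≠
              Multiset.map (WL H (fun _ => ()) t) Finset.univ.val) ↔
          (∃ t, Multiset.map (WWL G ℓ (fun _ => ()) t) Finset.univ.val ≠
                Multiset.map (WWL H ℓ (fun _ => ()) t) Finset.univ.val)) := by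
  refine ⟨fun G _ σ π0 u v => ⟨?_, ?_⟩, fun G _ W _ _ H _ => ⟨?_, ?_⟩⟩
  · rintro ⟨t, ht⟩
    exact ⟨t, ne_of_apply_ne (ColorType.toWL t) (by rwa [toWL_WWL hℓ, toWL_WWL hℓ])⟩
  · rintro ⟨t, ht⟩
    exact ⟨ℓ * t, ne_of_apply_ne (WLColorType.toWWL ℓ t) (by rwa [toWWL_WL, toWWL_WL])⟩
  · rintro ⟨t, ht⟩
    exact ⟨t, map_ne_map_of_decode _ (toWL_WWL hℓ G _ t) (toWL_WWL hℓ H _ t) ht⟩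
  · rintro ⟨t, ht⟩
    exact ⟨ℓ * t, map_ne_map_of_decode _ (toWWL_WL G _ ℓ t) (toWWL_WL H _ ℓ t) ht⟩

end RSNN
end
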